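/- The set P_I(C_2) is given as follows: if C_1 < C_2, then P_I(C_2) = [Q_1, 1]; if C_1 = C_2, then P_I(C_2) = [Q_1, 1] when ρ_{11} < |ρ_{12}| ≤ ρ_{22}, P_I(C_2) = [Q_2, 1] when ρ_{22} < |ρ_{12}| ≤ ρ_{11}, and P_I(C_2) = [2|ρ_{12}|, 1] when |ρ_{12}| ≤ ρ_{11} and |ρ_{12}| ≤ ρ_{22}. -/

import Mathlib

/-!
Conjugating by `V = ρ₀^{1/2} U`, where `U` has columns `ν₁, ν₂`, gives
`q₁ρ₁ = V diag(C₁, 1 - C₂) Vᴴ` and `q₂ρ₂ = V diag(1 - C₁, C₂) Vᴴ`, and turns a POVM into a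
decomposition `N₀ + N₁ + N₂ = VᴴV = !![ρ₁₁, ρ₁₂; ρ̄₁₂, ρ₂₂]` into positive semidefinite matrices
`Nᵢ = Vᴴ Mᵢ V`, with `P_I = tr N₀`. In these coordinates
`P̄_cor(C₂) = C₂ - ((C₂ - C₁) (N₁)₁₁ + (2C₂ - 1) (N₁)₂₂ + (C₁ + C₂ - 1) (N₂)₁₁)`,
so the optimum is `C₂`, attained exactly when `N₁ = diag(t₁, 0)` and `N₂ = diag(0, t₂)`, with
`t₁ = 0` if `C₁ < C₂`. Then `N₀ = !![x, ρ₁₂; ρ̄₁₂, y]` with `x ≤ ρ₁₁`, `y ≤ ρ₂₂`, and `N₀ ≥ 0` iff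
`x, y ≥ 0` and `|ρ₁₂|² ≤ xy`. Minimising `x + y` over this region gives the lower endpoints:
`x = ρ₁₁` when it is forced or when `ρ₁₁ < |ρ₁₂|`, and `x = y = |ρ₁₂|` otherwise.
-/

open Matrix ComplexOrder

noncomputable section

namespace FRIR

/-- A three-outcome POVM on a qubit: `M₀` is the inconclusive outcome. -/
def IsPOVM (M₀ M₁ M₂ : Matrix (Fin 2) (Fin 2) ℂ) : Prop :=
  M₀.PosSemidef ∧ M₁.PosSemidef ∧ M₂.PosSemidef ∧ M₀ + M₁ + M₂ = 1

/-- `ρ₀ = q₁ρ₁ + q₂ρ₂`. -/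
def rho0 (q₁ q₂ : ℝ) (ρ₁ ρ₂ : Matrix (Fin 2) (Fin 2) ℂ) : Matrix (Fin 2) (Fin 2) ℂ :=
  (q₁ : ℂ) • ρ₁ + (q₂ : ℂ) • ρ₂

/-- The probability of the inconclusive result, `P_I = tr(ρ₀M₀)`. -/
def PIof (q₁ q₂ : ℝ) (ρ₁ ρ₂ M₀ : Matrix (Fin 2) (Fin 2) ℂ) : ℝ :=
  (Matrix.trace (rho0 q₁ q₂ ρ₁ ρ₂ * M₀)).re

/-- `P_cor = q₁tr(ρ₁M₁) + q₂tr(ρ₂M₂)`. -/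
def Pcor (q₁ q₂ : ℝ) (ρ₁ ρ₂ M₁ M₂ : Matrix (Fin 2) (Fin 2) ℂ) : ℝ :=
  q₁ * (Matrix.trace (ρ₁ * M₁)).re + q₂ * (Matrix.trace (ρ₂ * M₂)).re

/-- `P̄_cor = q·tr(ρ₀M₀) + q₁tr(ρ₁M₁) + q₂tr(ρ₂M₂)`. -/
def PbarCor (q q₁ q₂ : ℝ) (ρ₁ ρ₂ M₀ M₁ M₂ : Matrix (Fin 2) (Fin 2) ℂ) : ℝ :=
  q * PIof q₁ q₂ ρ₁ ρ₂ M₀ + Pcor q₁ q₂ ρ₁ ρ₂ M₁ M₂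

/-- `P̄_cor^opt(q)`: the maximal value of `P̄_cor` over all POVMs. -/
def PbarOpt (q q₁ q₂ : ℝ) (ρ₁ ρ₂ : Matrix (Fin 2) (Fin 2) ℂ) : ℝ :=
  sSup {x : ℝ | ∃ M₀ M₁ M₂, IsPOVM M₀ M₁ M₂ ∧ PbarCor q q₁ q₂ ρ₁ ρ₂ M₀ M₁ M₂ = x}

/-- `P_cor^opt(Q)`: the maximal value of `P_cor` over POVMs with `P_I = Q`. -/
def PcorOpt (Q q₁ q₂ : ℝ) (ρ₁ ρ₂ : Matrix (Fin 2) (Fin 2) ℂ) : ℝ :=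
  sSup {x : ℝ | ∃ M₀ M₁ M₂, IsPOVM M₀ M₁ M₂ ∧
    PIof q₁ q₂ ρ₁ ρ₂ M₀ = Q ∧ Pcor q₁ q₂ ρ₁ ρ₂ M₁ M₂ = x}

/-- `P_I(q) = { tr(ρ₀M₀) : POVMs attaining P̄_cor^opt(q) }`. -/
def PIset (q q₁ q₂ : ℝ) (ρ₁ ρ₂ : Matrix (Fin 2) (Fin 2) ℂ) : Set ℝ :=
  {Q : ℝ | ∃ M₀ M₁ M₂, IsPOVM M₀ M₁ M₂ ∧
    PbarCor q q₁ q₂ ρ₁ ρ₂ M₀ M₁ M₂ = PbarOpt q q₁ q₂ ρ₁ ρ₂ ∧ PIof q₁ q₂ ρ₁ ρ₂ M₀ = Q}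

/-- `q₀⁽⁰⁾ = sup{q > 0 : 0 ∈ P_I(q)}`. -/
def q0low (q₁ q₂ : ℝ) (ρ₁ ρ₂ : Matrix (Fin 2) (Fin 2) ℂ) : ℝ :=
  sSup {q : ℝ | 0 < q ∧ (0 : ℝ) ∈ PIset q q₁ q₂ ρ₁ ρ₂}

/-- `q₀⁽¹⁾ = inf{q > 0 : 1 ∈ P_I(q)}`. -/
def q0high (q₁ q₂ : ℝ) (ρ₁ ρ₂ : Matrix (Fin 2) (Fin 2) ℂ) : ℝ :=
  sInf {q : ℝ | 0 < q ∧ (1 : ℝ) ∈ PIset q q₁ q₂ ρ₁ ρ₂}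

lemma re_diag_nonneg {n : Type*} [Fintype n] {N : Matrix n n ℂ} (hN : N.PosSemidef) (i : n) :
    0 ≤ (N i i).re :=
  (Complex.nonneg_iff.1 hN.diag_nonneg).1

lemma posSemidef_iff_of_fin_two {A : Matrix (Fin 2) (Fin 2) ℂ} (hA : A.IsHermitian) :
    A.PosSemidef ↔
      0 ≤ (A 0 0).re ∧ 0 ≤ (A 1 1).re ∧ ‖A 0 1‖ ^ 2 ≤ (A 0 0).re * (A 1 1).re := by
  have hdiag : ∀ i, A i i = ((A i i).re : ℂ) := fun i => (hA.coe_re_apply_self i).symm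
  have h10 : A 1 0 = star (A 0 1) := (hA.apply 1 0).symm
  have htr : (A 0 0).re + (A 1 1).re = hA.eigenvalues 0 + hA.eigenvalues 1 := by
    simpa [trace_fin_two, Fin.sum_univ_two] using congrArg Complex.re hA.trace_eq_sum_eigenvalues
  have hdet : (A 0 0).re * (A 1 1).re - ‖A 0 1‖ ^ 2 = hA.eigenvalues 0 * hA.eigenvalues 1 := by
    have := hA.det_eq_prod_eigenvalues
    rw [det_fin_two, Fin.prod_univ_two, hdiag 0, hdiag 1, h10, Complex.star_def,
      Complex.mul_conj, Complex.normSq_eq_norm_sq] at this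
    apply Complex.ofReal_injective
    push_cast at this ⊢
    simpa using this
  -- two reals are nonnegative iff their sum and product are
  rw [hA.posSemidef_iff_eigenvalues_nonneg, Pi.le_def, Fin.forall_fin_two]
  simp only [Pi.zero_apply]
  constructor
  · rintro ⟨h0, h1⟩
    have := sq_nonneg ‖A 0 1‖
    refine ⟨?_, ?_, ?_⟩ <;> nlinarith [mul_nonneg h0 h1]
  · rintro ⟨hp, hq, hn⟩
    constructor <;> nlinarith [mul_nonneg hp hq]

/-- The traces of `!![x, c; c̄, y] ≥ 0` with `‖c‖ = r`, `x ≤ a`, `y ≤ b`, and `x = a` if `P`. -/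
def diagonalSums (P : Prop) (a b r : ℝ) : Set ℝ :=
  {s | ∃ x y, (P → x = a) ∧ 0 ≤ x ∧ x ≤ a ∧ 0 ≤ y ∧ y ≤ b ∧ r ^ 2 ≤ x * y ∧ s = x + y}

section diagonalSums

variable {P : Prop} {a b r : ℝ}

lemma diagonalSums_comm (hP : ¬P) : diagonalSums P a b r = diagonalSums P b a r := by
  ext s
  constructor <;>
  · rintro ⟨x, y, -, hx, hxa, hy, hyb, hxy, rfl⟩
    exact ⟨y, x, hP.elim, hy, hyb, hx, hxa, by linarith, add_comm x y⟩

lemma Icc_subset_diagonalSums (ha : 0 < a) :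
    Set.Icc (a + r ^ 2 / a) (a + b) ⊆ diagonalSums P a b r := by
  rintro s ⟨hs, hs'⟩
  have : 0 ≤ r ^ 2 / a := by positivity
  refine ⟨a, s - a, fun _ => rfl, ha.le, le_rfl, by linarith, by linarith, ?_, by ring⟩
  rw [← div_le_iff₀' ha]
  linarith

lemma diagonalSums_eq_Icc_of_pinned (hP : P) (ha : 0 < a) :
    diagonalSums P a b r = Set.Icc (a + r ^ 2 / a) (a + b) := by
  refine subset_antisymm ?_ (Icc_subset_diagonalSums ha)
  rintro s ⟨x, y, hxa, -, -, -, hyb, hxy, rfl⟩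
  obtain rfl := hxa hP
  have : r ^ 2 / x ≤ y := (div_le_iff₀' ha).2 hxy
  constructor <;> linarith

lemma diagonalSums_eq_Icc_of_lt (ha : 0 < a) (har : a < r) :
    diagonalSums P a b r = Set.Icc (a + r ^ 2 / a) (a + b) := by
  refine subset_antisymm ?_ (Icc_subset_diagonalSums ha)
  rintro s ⟨x, y, -, hx, hxa, hy, hyb, hxy, rfl⟩
  have hx : 0 < x := by
    rcases hx.eq_or_lt with rfl | hx
    · nlinarith
    · exact hx
  -- `x ↦ x + r² / x` decreases on `(0, r]`, so `x = a` is optimal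
  have : (a - x) * (r ^ 2 - a * x) ≤ x * (a * (x + y) - a ^ 2 - r ^ 2) := by
    nlinarith [mul_le_mul_of_nonneg_left hxy ha.le]
  have : r ^ 2 ≤ a * (x + y - a) := by
    nlinarith [mul_nonneg (sub_nonneg.2 hxa) (show 0 ≤ r ^ 2 - a * x by nlinarith)]
  have : r ^ 2 / a ≤ x + y - a := (div_le_iff₀' ha).2 this
  constructor <;> linarith

lemma diagonalSums_eq_Icc_of_le (hP : ¬P) (hr : 0 ≤ r) (hra : r ≤ a) (hrb : r ≤ b) :
    diagonalSums P a b r = Set.Icc (2 * r) (a + b) := by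
  ext s
  constructor
  · rintro ⟨x, y, -, hx, hxa, hy, hyb, hxy, rfl⟩
    constructor
    · nlinarith [sq_nonneg (x - y)]
    · linarith
  · rintro ⟨hs, hs'⟩
    -- the point with `x + y = s` on the path `(r, r) → (a, r) → (a, b)`
    have hx : r ≤ min a (s - r) := le_min hra (by linarith)
    have hy : r ≤ s - min a (s - r) := by linarith [min_le_right a (s - r)]
    have hyb : s - min a (s - r) ≤ b := by
      rcases min_choice a (s - r) with h | h <;> rw [h] <;> linarith
    exact ⟨min a (s - r), s - min a (s - r), hP.elim, hr.trans hx, min_le_left _ _, hr.trans hy,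
      hyb, by nlinarith, by ring⟩

end diagonalSums

def deficit (C₁ C₂ : ℝ) (N₁ N₂ : Matrix (Fin 2) (Fin 2) ℂ) : ℝ :=
  (C₂ - C₁) * (N₁ 0 0).re + (2 * C₂ - 1) * (N₁ 1 1).re + (C₁ + C₂ - 1) * (N₂ 0 0).re

section deficit

variable {C₁ C₂ : ℝ} {N₀ N₁ N₂ : Matrix (Fin 2) (Fin 2) ℂ}

lemma deficit_nonneg (hC12 : C₁ ≤ C₂) (hC : 1 < C₁ + C₂) (h₁ : N₁.PosSemidef)
    (h₂ : N₂.PosSemidef) : 0 ≤ deficit C₁ C₂ N₁ N₂ := by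
  have := mul_nonneg (sub_nonneg.2 hC12) (re_diag_nonneg h₁ 0)
  have := mul_nonneg (by linarith : (0 : ℝ) ≤ 2 * C₂ - 1) (re_diag_nonneg h₁ 1)
  have := mul_nonneg (by linarith : (0 : ℝ) ≤ C₁ + C₂ - 1) (re_diag_nonneg h₂ 0)
  rw [deficit]
  linarith

lemma diag_re_eq_zero_of_deficit_eq_zero (hC12 : C₁ ≤ C₂) (hC : 1 < C₁ + C₂)
    (h₁ : N₁.PosSemidef) (h₂ : N₂.PosSemidef) (h : deficit C₁ C₂ N₁ N₂ = 0) :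
    (N₁ 1 1).re = 0 ∧ (N₂ 0 0).re = 0 ∧ (C₁ < C₂ → (N₁ 0 0).re = 0) := by
  have h₁₀ := re_diag_nonneg h₁ 0
  have h₁₁ := re_diag_nonneg h₁ 1
  have h₂₀ := re_diag_nonneg h₂ 0
  have := mul_nonneg (sub_nonneg.2 hC12) h₁₀
  have := mul_nonneg (by linarith : (0 : ℝ) ≤ 2 * C₂ - 1) h₁₁
  have := mul_nonneg (by linarith : (0 : ℝ) ≤ C₁ + C₂ - 1) h₂₀
  rw [deficit] at h
  exact ⟨by nlinarith, by nlinarith, fun _ => by nlinarith⟩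

lemma apply_zero_one_eq_zero_of_re_mul_re_eq_zero (h : N₀.PosSemidef)
    (h0 : (N₀ 0 0).re * (N₀ 1 1).re = 0) : N₀ 0 1 = 0 := by
  have := ((posSemidef_iff_of_fin_two h.1).1 h).2.2
  rw [h0] at this
  exact norm_eq_zero.1 (pow_eq_zero_iff two_ne_zero |>.1 (le_antisymm this (sq_nonneg _)))

lemma mem_diagonalSums_of_decomposition (hC12 : C₁ ≤ C₂) (hC : 1 < C₁ + C₂) {a b : ℝ} {c : ℂ}
    (h₀ : N₀.PosSemidef) (h₁ : N₁.PosSemidef) (h₂ : N₂.PosSemidef)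
    (hsum : N₀ + N₁ + N₂ = !![(a : ℂ), c; star c, (b : ℂ)]) (hdef : deficit C₁ C₂ N₁ N₂ = 0) :
    N₀.trace.re ∈ diagonalSums (C₁ < C₂) a b ‖c‖ := by
  obtain ⟨h₁₁, h₂₀, h₁₀⟩ := diag_re_eq_zero_of_deficit_eq_zero hC12 hC h₁ h₂ hdef
  obtain ⟨hx, hy, hxy⟩ := (posSemidef_iff_of_fin_two h₀.1).1 h₀
  have hN₁ := apply_zero_one_eq_zero_of_re_mul_re_eq_zero h₁ (by rw [h₁₁, mul_zero])
  have hN₂ := apply_zero_one_eq_zero_of_re_mul_re_eq_zero h₂ (by rw [h₂₀, zero_mul])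
  have e₀₀ : (N₀ 0 0).re + (N₁ 0 0).re + (N₂ 0 0).re = a := by
    simpa using congrArg Complex.re (congrFun₂ hsum 0 0)
  have e₁₁ : (N₀ 1 1).re + (N₁ 1 1).re + (N₂ 1 1).re = b := by
    simpa using congrArg Complex.re (congrFun₂ hsum 1 1)
  have e₀₁ : N₀ 0 1 = c := by simpa [hN₁, hN₂] using congrFun₂ hsum 0 1
  have := re_diag_nonneg h₁ 0
  have := re_diag_nonneg h₂ 1
  refine ⟨(N₀ 0 0).re, (N₀ 1 1).re, fun hlt => ?_, hx, by linarith, hy, by linarith,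
    e₀₁ ▸ hxy, by simp [trace_fin_two]⟩
  linarith [h₁₀ hlt]

lemma exists_decomposition_of_mem_diagonalSums (hC12 : C₁ ≤ C₂) {a b : ℝ} {c : ℂ} {s : ℝ}
    (hs : s ∈ diagonalSums (C₁ < C₂) a b ‖c‖) :
    ∃ N₀ N₁ N₂ : Matrix (Fin 2) (Fin 2) ℂ, N₀.PosSemidef ∧ N₁.PosSemidef ∧ N₂.PosSemidef ∧
      N₀ + N₁ + N₂ = !![(a : ℂ), c; star c, (b : ℂ)] ∧ deficit C₁ C₂ N₁ N₂ = 0 ∧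
      N₀.trace.re = s := by
  obtain ⟨x, y, hpin, hx, hxa, hy, hyb, hxy, rfl⟩ := hs
  have hherm : (!![(x : ℂ), c; star c, (y : ℂ)]).IsHermitian := by
    ext i j
    fin_cases i <;> fin_cases j <;> simp
  refine ⟨!![(x : ℂ), c; star c, (y : ℂ)], diagonal ![((a - x : ℝ) : ℂ), 0],
    diagonal ![0, ((b - y : ℝ) : ℂ)],
    (posSemidef_iff_of_fin_two hherm).2 (by simpa using ⟨hx, hy, hxy⟩),
    posSemidef_diagonal_iff.2 ?_, posSemidef_diagonal_iff.2 ?_, ?_, ?_, by simp [trace_fin_two]⟩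
  · exact Fin.forall_fin_two.2 ⟨Complex.zero_le_real.2 (by linarith), le_rfl⟩
  · exact Fin.forall_fin_two.2 ⟨le_rfl, Complex.zero_le_real.2 (by linarith)⟩
  · ext i j
    fin_cases i <;> fin_cases j <;> simp
  · rcases hC12.lt_or_eq with hlt | rfl
    · simp [deficit, hpin hlt]
    · simp [deficit]

end deficit

lemma conjTranspose_mul_mul_apply_of_columns {ι n R : Type*} [Fintype n] [CommSemiring R]
    [StarRing R] (v : ι → n → R) (A : Matrix n n R) (i j : ι) :
    ((of v)ᵀᴴ * A * (of v)ᵀ) i j = star (v i) ⬝ᵥ A *ᵥ v j := by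
  simp only [mul_apply, conjTranspose_apply, transpose_apply, of_apply, dotProduct, mulVec,
    Pi.star_apply, Finset.mul_sum, Finset.sum_mul, mul_assoc]
  exact Finset.sum_comm

lemma columns_mul_diagonal_mul_conjTranspose {ι n R : Type*} [Fintype ι] [DecidableEq ι]
    [CommSemiring R] [StarRing R] (v : ι → n → R) (d : ι → R) :
    (of v)ᵀ * diagonal d * (of v)ᵀᴴ = ∑ i, d i • vecMulVec (v i) (star (v i)) := by
  ext k l
  rw [mul_apply]
  simp only [mul_diagonal, transpose_apply, conjTranspose_apply, of_apply, Matrix.sum_apply,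
    Matrix.smul_apply, vecMulVec_apply, Pi.star_apply, smul_eq_mul]
  exact Finset.sum_congr rfl fun i _ => by ring

lemma columns_conjTranspose_mul_self {ν₁ ν₂ : Fin 2 → ℂ} (hν₁ : star ν₁ ⬝ᵥ ν₁ = 1)
    (hν₂ : star ν₂ ⬝ᵥ ν₂ = 1) (hν₁₂ : star ν₁ ⬝ᵥ ν₂ = 0) :
    (of ![ν₁, ν₂])ᵀᴴ * (of ![ν₁, ν₂])ᵀ = 1 := by
  have hν₂₁ : star ν₂ ⬝ᵥ ν₁ = 0 := by rw [star_dotProduct, hν₁₂, star_zero]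
  have := conjTranspose_mul_mul_apply_of_columns ![ν₁, ν₂] 1
  simp only [Matrix.mul_one, one_mulVec] at this
  ext i j
  fin_cases i <;> fin_cases j <;> simp [this, hν₁, hν₂, hν₁₂, hν₂₁]

lemma exists_congruence_to_diagonal {q₁ q₂ C₁ C₂ ρ11 ρ22 : ℝ} {ρ12 : ℂ}
    {ρ₁ ρ₂ S : Matrix (Fin 2) (Fin 2) ℂ} {ν₁ ν₂ : Fin 2 → ℂ}
    (hρ0 : (rho0 q₁ q₂ ρ₁ ρ₂).PosDef) (hS : S.IsHermitian) (hSS : S * S = rho0 q₁ q₂ ρ₁ ρ₂)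
    (hν₁ : star ν₁ ⬝ᵥ ν₁ = 1) (hν₂ : star ν₂ ⬝ᵥ ν₂ = 1) (hν₁₂ : star ν₁ ⬝ᵥ ν₂ = 0)
    (hbar₁ : S * ((C₁ : ℂ) • vecMulVec ν₁ (star ν₁)
        + ((1 - C₂ : ℝ) : ℂ) • vecMulVec ν₂ (star ν₂)) * S = (q₁ : ℂ) • ρ₁)
    (hbar₂ : S * (((1 - C₁ : ℝ) : ℂ) • vecMulVec ν₁ (star ν₁)
        + (C₂ : ℂ) • vecMulVec ν₂ (star ν₂)) * S = (q₂ : ℂ) • ρ₂)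
    (h11 : (ρ11 : ℂ) = star ν₁ ⬝ᵥ (rho0 q₁ q₂ ρ₁ ρ₂ *ᵥ ν₁))
    (h22 : (ρ22 : ℂ) = star ν₂ ⬝ᵥ (rho0 q₁ q₂ ρ₁ ρ₂ *ᵥ ν₂))
    (h12 : ρ12 = star ν₁ ⬝ᵥ (rho0 q₁ q₂ ρ₁ ρ₂ *ᵥ ν₂)) :
    ∃ V : Matrix (Fin 2) (Fin 2) ℂ, IsUnit V ∧
      (q₁ : ℂ) • ρ₁ = V * diagonal ![(C₁ : ℂ), ((1 - C₂ : ℝ) : ℂ)] * Vᴴ ∧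
      (q₂ : ℂ) • ρ₂ = V * diagonal ![((1 - C₁ : ℝ) : ℂ), (C₂ : ℂ)] * Vᴴ ∧
      Vᴴ * V = !![(ρ11 : ℂ), ρ12; star ρ12, (ρ22 : ℂ)] := by
  set U := (of ![ν₁, ν₂])ᵀ
  have hU : Uᴴ * U = 1 := columns_conjTranspose_mul_self hν₁ hν₂ hν₁₂
  have hentry : ∀ A i j, (Uᴴ * A * U) i j = star (![ν₁, ν₂] i) ⬝ᵥ A *ᵥ ![ν₁, ν₂] j :=
    conjTranspose_mul_mul_apply_of_columns _
  have hconj : ∀ d : Fin 2 → ℂ, S * U * diagonal d * (S * U)ᴴ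
      = S * (d 0 • vecMulVec ν₁ (star ν₁) + d 1 • vecMulVec ν₂ (star ν₂)) * S := by
    intro d
    rw [conjTranspose_mul, hS.eq, show S * U * diagonal d * (Uᴴ * S) = S * (U * diagonal d * Uᴴ) * S
      by simp only [Matrix.mul_assoc], columns_mul_diagonal_mul_conjTranspose, Fin.sum_univ_two]
    rfl
  have hVV : S * U * (S * U)ᴴ = rho0 q₁ q₂ ρ₁ ρ₂ := by
    rw [conjTranspose_mul, hS.eq, Matrix.mul_assoc, ← Matrix.mul_assoc U, mul_eq_one_comm.mp hU,
      Matrix.one_mul, hSS]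
  refine ⟨S * U, isUnit_of_mul_isUnit_left (hVV ▸ hρ0.isUnit), ?_, ?_, ?_⟩
  · rw [hconj, ← hbar₁]; rfl
  · rw [hconj, ← hbar₂]; rfl
  · have hR : (S * U)ᴴ * (S * U) = Uᴴ * rho0 q₁ q₂ ρ₁ ρ₂ * U := by
      rw [conjTranspose_mul, hS.eq, ← hSS]; simp only [Matrix.mul_assoc]
    have h21 := (isHermitian_conjTranspose_mul_mul U hρ0.1).apply 1 0
    rw [hR]
    ext i j
    fin_cases i <;> fin_cases j
    · exact (hentry _ 0 0).trans h11.symm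
    · exact (hentry _ 0 1).trans h12.symm
    · exact h21.symm.trans (congrArg star ((hentry _ 0 1).trans h12.symm))
    · exact (hentry _ 1 1).trans h22.symm

lemma trace_rho0 {q₁ q₂ : ℝ} {ρ₁ ρ₂ : Matrix (Fin 2) (Fin 2) ℂ} (hq : q₁ + q₂ = 1)
    (htr₁ : ρ₁.trace = 1) (htr₂ : ρ₂.trace = 1) : (rho0 q₁ q₂ ρ₁ ρ₂).trace = 1 := by
  simp [rho0, htr₁, htr₂, ← Complex.ofReal_add, hq]

section Reduction

variable {q₁ q₂ C₁ C₂ : ℝ} {ρ₁ ρ₂ V : Matrix (Fin 2) (Fin 2) ℂ}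

lemma rho0_eq_mul_conjTranspose
    (h₁ : (q₁ : ℂ) • ρ₁ = V * diagonal ![(C₁ : ℂ), ((1 - C₂ : ℝ) : ℂ)] * Vᴴ)
    (h₂ : (q₂ : ℂ) • ρ₂ = V * diagonal ![((1 - C₁ : ℝ) : ℂ), (C₂ : ℂ)] * Vᴴ) :
    rho0 q₁ q₂ ρ₁ ρ₂ = V * Vᴴ := by
  have hD : diagonal ![(C₁ : ℂ), ((1 - C₂ : ℝ) : ℂ)] + diagonal ![((1 - C₁ : ℝ) : ℂ), (C₂ : ℂ)]
      = 1 := by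
    rw [diagonal_add, ← diagonal_one]
    congr 1
    ext i
    fin_cases i <;> simp
  rw [rho0, h₁, h₂, ← add_mul, ← mul_add, hD, Matrix.mul_one]

lemma trace_conjTranspose_mul_self_eq_one
    (h₁ : (q₁ : ℂ) • ρ₁ = V * diagonal ![(C₁ : ℂ), ((1 - C₂ : ℝ) : ℂ)] * Vᴴ)
    (h₂ : (q₂ : ℂ) • ρ₂ = V * diagonal ![((1 - C₁ : ℝ) : ℂ), (C₂ : ℂ)] * Vᴴ)
    (htr : (rho0 q₁ q₂ ρ₁ ρ₂).trace = 1) : (Vᴴ * V).trace = 1 := by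
  rw [trace_mul_comm, ← rho0_eq_mul_conjTranspose h₁ h₂, htr]

lemma PIof_eq_trace (hρ : rho0 q₁ q₂ ρ₁ ρ₂ = V * Vᴴ) (M : Matrix (Fin 2) (Fin 2) ℂ) :
    PIof q₁ q₂ ρ₁ ρ₂ M = (Vᴴ * M * V).trace.re := by
  rw [PIof, hρ, ← trace_mul_cycle]

lemma mul_re_trace_mul_eq {q d₀ d₁ : ℝ} {ρ : Matrix (Fin 2) (Fin 2) ℂ}
    (h : (q : ℂ) • ρ = V * diagonal ![(d₀ : ℂ), (d₁ : ℂ)] * Vᴴ) (M : Matrix (Fin 2) (Fin 2) ℂ) :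
    q * (ρ * M).trace.re = d₀ * ((Vᴴ * M * V) 0 0).re + d₁ * ((Vᴴ * M * V) 1 1).re := by
  have : (q : ℂ) * (ρ * M).trace = (diagonal ![(d₀ : ℂ), (d₁ : ℂ)] * (Vᴴ * M * V)).trace := by
    rw [← smul_eq_mul, ← trace_smul, ← smul_mul, h, Matrix.mul_assoc, Matrix.mul_assoc,
      trace_mul_comm]
    simp only [Matrix.mul_assoc]
  rw [← Complex.re_ofReal_mul, this, trace_fin_two]
  simp [diagonal_mul]

lemma PbarCor_eq_sub_deficit
    (h₁ : (q₁ : ℂ) • ρ₁ = V * diagonal ![(C₁ : ℂ), ((1 - C₂ : ℝ) : ℂ)] * Vᴴ)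
    (h₂ : (q₂ : ℂ) • ρ₂ = V * diagonal ![((1 - C₁ : ℝ) : ℂ), (C₂ : ℂ)] * Vᴴ)
    (htr : (rho0 q₁ q₂ ρ₁ ρ₂).trace = 1) {M₀ M₁ M₂ : Matrix (Fin 2) (Fin 2) ℂ}
    (hsum : M₀ + M₁ + M₂ = 1) :
    PbarCor C₂ q₁ q₂ ρ₁ ρ₂ M₀ M₁ M₂ = C₂ - deficit C₁ C₂ (Vᴴ * M₁ * V) (Vᴴ * M₂ * V) := by
  have hN₀ : Vᴴ * M₀ * V = Vᴴ * V - Vᴴ * M₁ * V - Vᴴ * M₂ * V := by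
    rw [eq_sub_of_add_eq (eq_sub_of_add_eq hsum)]
    simp only [Matrix.mul_sub, Matrix.sub_mul, Matrix.mul_one]
    abel
  have hR : (Vᴴ * V).trace.re = 1 := by
    rw [trace_conjTranspose_mul_self_eq_one h₁ h₂ htr, Complex.one_re]
  rw [PbarCor, Pcor, PIof_eq_trace (rho0_eq_mul_conjTranspose h₁ h₂), hN₀,
    mul_re_trace_mul_eq h₁, mul_re_trace_mul_eq h₂, deficit]
  simp only [trace_sub, Complex.sub_re, hR]
  simp only [trace_fin_two, Complex.add_re]
  ring

lemma PbarOpt_eq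
    (h₁ : (q₁ : ℂ) • ρ₁ = V * diagonal ![(C₁ : ℂ), ((1 - C₂ : ℝ) : ℂ)] * Vᴴ)
    (h₂ : (q₂ : ℂ) • ρ₂ = V * diagonal ![((1 - C₁ : ℝ) : ℂ), (C₂ : ℂ)] * Vᴴ)
    (htr : (rho0 q₁ q₂ ρ₁ ρ₂).trace = 1) (hC12 : C₁ ≤ C₂) (hC : 1 < C₁ + C₂) :
    PbarOpt C₂ q₁ q₂ ρ₁ ρ₂ = C₂ := by
  refine IsGreatest.csSup_eq ⟨⟨1, 0, 0, ⟨.one, .zero, .zero, by simp⟩, ?_⟩, ?_⟩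
  · rw [PbarCor_eq_sub_deficit h₁ h₂ htr (by simp)]
    simp [deficit]
  · rintro _ ⟨M₀, M₁, M₂, ⟨-, hM₁, hM₂, hsum⟩, rfl⟩
    rw [PbarCor_eq_sub_deficit h₁ h₂ htr hsum]
    linarith [deficit_nonneg hC12 hC (hM₁.conjTranspose_mul_mul_same V)
      (hM₂.conjTranspose_mul_mul_same V)]

lemma mem_PIset_iff (hV : IsUnit V)
    (h₁ : (q₁ : ℂ) • ρ₁ = V * diagonal ![(C₁ : ℂ), ((1 - C₂ : ℝ) : ℂ)] * Vᴴ)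
    (h₂ : (q₂ : ℂ) • ρ₂ = V * diagonal ![((1 - C₁ : ℝ) : ℂ), (C₂ : ℂ)] * Vᴴ)
    (htr : (rho0 q₁ q₂ ρ₁ ρ₂).trace = 1) (hC12 : C₁ ≤ C₂) (hC : 1 < C₁ + C₂) (Q : ℝ) :
    Q ∈ PIset C₂ q₁ q₂ ρ₁ ρ₂ ↔
      ∃ N₀ N₁ N₂ : Matrix (Fin 2) (Fin 2) ℂ, N₀.PosSemidef ∧ N₁.PosSemidef ∧ N₂.PosSemidef ∧
        N₀ + N₁ + N₂ = Vᴴ * V ∧ deficit C₁ C₂ N₁ N₂ = 0 ∧ N₀.trace.re = Q := by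
  have hρ := rho0_eq_mul_conjTranspose h₁ h₂
  rw [PIset, Set.mem_ofPred_eq, PbarOpt_eq h₁ h₂ htr hC12 hC]
  constructor
  · rintro ⟨M₀, M₁, M₂, ⟨h₀, h₁', h₂', hsum⟩, hopt, rfl⟩
    refine ⟨_, _, _, h₀.conjTranspose_mul_mul_same V, h₁'.conjTranspose_mul_mul_same V,
      h₂'.conjTranspose_mul_mul_same V, ?_, ?_, (PIof_eq_trace hρ M₀).symm⟩
    · simp only [← Matrix.add_mul, ← Matrix.mul_add, hsum, Matrix.mul_one]
    · rw [PbarCor_eq_sub_deficit h₁ h₂ htr hsum] at hopt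
      linarith
  · rintro ⟨N₀, N₁, N₂, h₀, h₁', h₂', hsum, hdef, rfl⟩
    set W := V⁻¹
    have hdet := (isUnit_iff_isUnit_det V).1 hV
    have hWV : W * V = 1 := nonsing_inv_mul V hdet
    have hVW : V * W = 1 := mul_nonsing_inv V hdet
    have hback : ∀ N, Vᴴ * (Wᴴ * N * W) * V = N := fun N => by
      rw [show Vᴴ * (Wᴴ * N * W) * V = (W * V)ᴴ * N * (W * V) by
        simp only [conjTranspose_mul, Matrix.mul_assoc], hWV, conjTranspose_one, Matrix.one_mul,
        Matrix.mul_one]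
    have hsumM : Wᴴ * N₀ * W + Wᴴ * N₁ * W + Wᴴ * N₂ * W = 1 := by
      rw [← Matrix.add_mul, ← Matrix.add_mul, ← Matrix.mul_add, ← Matrix.mul_add, hsum,
        show Wᴴ * (Vᴴ * V) * W = (V * W)ᴴ * (V * W) by
          simp only [conjTranspose_mul, Matrix.mul_assoc], hVW, conjTranspose_one, Matrix.one_mul]
    refine ⟨_, _, _, ⟨h₀.conjTranspose_mul_mul_same W, h₁'.conjTranspose_mul_mul_same W,
      h₂'.conjTranspose_mul_mul_same W, hsumM⟩, ?_, by rw [PIof_eq_trace hρ, hback]⟩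
    rw [PbarCor_eq_sub_deficit h₁ h₂ htr hsumM, hback, hback, hdef, sub_zero]

lemma PIset_eq_diagonalSums {a b : ℝ} {c : ℂ} (hV : IsUnit V)
    (h₁ : (q₁ : ℂ) • ρ₁ = V * diagonal ![(C₁ : ℂ), ((1 - C₂ : ℝ) : ℂ)] * Vᴴ)
    (h₂ : (q₂ : ℂ) • ρ₂ = V * diagonal ![((1 - C₁ : ℝ) : ℂ), (C₂ : ℂ)] * Vᴴ)
    (htr : (rho0 q₁ q₂ ρ₁ ρ₂).trace = 1) (hC12 : C₁ ≤ C₂) (hC : 1 < C₁ + C₂)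
    (hR : Vᴴ * V = !![(a : ℂ), c; star c, (b : ℂ)]) :
    PIset C₂ q₁ q₂ ρ₁ ρ₂ = diagonalSums (C₁ < C₂) a b ‖c‖ := by
  ext Q
  rw [mem_PIset_iff hV h₁ h₂ htr hC12 hC, hR]
  constructor
  · rintro ⟨N₀, N₁, N₂, h₀, h₁', h₂', hsum, hdef, rfl⟩
    exact mem_diagonalSums_of_decomposition hC12 hC h₀ h₁' h₂' hsum hdef
  · exact exists_decomposition_of_mem_diagonalSums hC12

end Reduction

theorem stmt6_general
    (q₁ q₂ : ℝ) (ρ₁ ρ₂ : Matrix (Fin 2) (Fin 2) ℂ)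
    (hq : q₁ + q₂ = 1)
    (htr₁ : ρ₁.trace = 1)
    (htr₂ : ρ₂.trace = 1)
    (hρ0 : (rho0 q₁ q₂ ρ₁ ρ₂).PosDef)
    (S : Matrix (Fin 2) (Fin 2) ℂ) (hS : S.PosSemidef) (hSS : S * S = rho0 q₁ q₂ ρ₁ ρ₂)
    (ν₁ ν₂ : Fin 2 → ℂ)
    (hν₁ : star ν₁ ⬝ᵥ ν₁ = 1) (hν₂ : star ν₂ ⬝ᵥ ν₂ = 1) (hν₁₂ : star ν₁ ⬝ᵥ ν₂ = 0)
    (C₁ C₂ : ℝ) (hC12 : C₁ ≤ C₂) (hCsum : 1 < C₁ + C₂)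
    (hbar₁ : S * ((C₁ : ℂ) • vecMulVec ν₁ (star ν₁)
        + ((1 - C₂ : ℝ) : ℂ) • vecMulVec ν₂ (star ν₂)) * S = (q₁ : ℂ) • ρ₁)
    (hbar₂ : S * (((1 - C₁ : ℝ) : ℂ) • vecMulVec ν₁ (star ν₁)
        + (C₂ : ℂ) • vecMulVec ν₂ (star ν₂)) * S = (q₂ : ℂ) • ρ₂)
    (ρ11 ρ22 : ℝ) (ρ12 : ℂ)
    (h11 : (ρ11 : ℂ) = star ν₁ ⬝ᵥ (rho0 q₁ q₂ ρ₁ ρ₂ *ᵥ ν₁))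
    (h22 : (ρ22 : ℂ) = star ν₂ ⬝ᵥ (rho0 q₁ q₂ ρ₁ ρ₂ *ᵥ ν₂))
    (h12 : ρ12 = star ν₁ ⬝ᵥ (rho0 q₁ q₂ ρ₁ ρ₂ *ᵥ ν₂))
    :
    (C₁ < C₂ →
        PIset C₂ q₁ q₂ ρ₁ ρ₂ = Set.Icc (ρ11 + ‖ρ12‖ ^ 2 / ρ11) 1) ∧
      (C₁ = C₂ →
        ((ρ11 < ‖ρ12‖ → ‖ρ12‖ ≤ ρ22 →
            PIset C₂ q₁ q₂ ρ₁ ρ₂ = Set.Icc (ρ11 + ‖ρ12‖ ^ 2 / ρ11) 1) ∧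
          (ρ22 < ‖ρ12‖ → ‖ρ12‖ ≤ ρ11 →
            PIset C₂ q₁ q₂ ρ₁ ρ₂ = Set.Icc (ρ22 + ‖ρ12‖ ^ 2 / ρ22) 1) ∧
          (‖ρ12‖ ≤ ρ11 → ‖ρ12‖ ≤ ρ22 →
            PIset C₂ q₁ q₂ ρ₁ ρ₂ = Set.Icc (2 * ‖ρ12‖) 1))) := by
  obtain ⟨V, hV, h₁, h₂, hR⟩ :=
    exists_congruence_to_diagonal hρ0 hS.1 hSS hν₁ hν₂ hν₁₂ hbar₁ hbar₂ h11 h22 h12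
  have htr := trace_rho0 hq htr₁ htr₂
  have hPI := PIset_eq_diagonalSums hV h₁ h₂ htr hC12 hCsum hR
  have hRpos : (Vᴴ * V).PosDef := .conjTranspose_mul_self V (mulVec_injective_of_isUnit hV)
  have hρ11 : 0 < ρ11 := by simpa [hR] using hRpos.diag_pos (i := 0)
  have hρ22 : 0 < ρ22 := by simpa [hR] using hRpos.diag_pos (i := 1)
  have hsum : ρ11 + ρ22 = 1 := by
    have := trace_conjTranspose_mul_self_eq_one h₁ h₂ htr
    rw [hR, trace_fin_two_of] at this
    exact_mod_cast this
  refine ⟨fun hlt => ?_, fun heq => ⟨fun hlt _ => ?_, fun hlt _ => ?_, fun hle₁ hle₂ => ?_⟩⟩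
  · rw [hPI, diagonalSums_eq_Icc_of_pinned hlt hρ11, hsum]
  · rw [hPI, diagonalSums_eq_Icc_of_lt hρ11 hlt, hsum]
  · rw [hPI, diagonalSums_comm heq.not_lt, diagonalSums_eq_Icc_of_lt hρ22 hlt, add_comm ρ22 ρ11,
      hsum]
  · rw [hPI, diagonalSums_eq_Icc_of_le heq.not_lt (norm_nonneg _) hle₁ hle₂, hsum]

/-- Description of the set `P_I(C₂)` in the four cases. -/
theorem stmt6
    (q₁ q₂ : ℝ) (ρ₁ ρ₂ : Matrix (Fin 2) (Fin 2) ℂ)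
    (hq₁ : 0 < q₁) (hq₂ : 0 < q₂) (hq : q₁ + q₂ = 1)
    (hρ₁ : ρ₁.PosSemidef) (htr₁ : ρ₁.trace = 1)
    (hρ₂ : ρ₂.PosSemidef) (htr₂ : ρ₂.trace = 1)
    (hρ0 : (rho0 q₁ q₂ ρ₁ ρ₂).PosDef)
    (S : Matrix (Fin 2) (Fin 2) ℂ) (hS : S.PosSemidef) (hSS : S * S = rho0 q₁ q₂ ρ₁ ρ₂)
    (ν₁ ν₂ : Fin 2 → ℂ)
    (hν₁ : star ν₁ ⬝ᵥ ν₁ = 1) (hν₂ : star ν₂ ⬝ᵥ ν₂ = 1) (hν₁₂ : star ν₁ ⬝ᵥ ν₂ = 0)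
    (C₁ C₂ : ℝ) (hC12 : C₁ ≤ C₂) (hCsum : 1 < C₁ + C₂)
    (hbar₁ : S * ((C₁ : ℂ) • vecMulVec ν₁ (star ν₁)
        + ((1 - C₂ : ℝ) : ℂ) • vecMulVec ν₂ (star ν₂)) * S = (q₁ : ℂ) • ρ₁)
    (hbar₂ : S * (((1 - C₁ : ℝ) : ℂ) • vecMulVec ν₁ (star ν₁)
        + (C₂ : ℂ) • vecMulVec ν₂ (star ν₂)) * S = (q₂ : ℂ) • ρ₂)
    (ρ11 ρ22 : ℝ) (ρ12 : ℂ)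
    (h11 : (ρ11 : ℂ) = star ν₁ ⬝ᵥ (rho0 q₁ q₂ ρ₁ ρ₂ *ᵥ ν₁))
    (h22 : (ρ22 : ℂ) = star ν₂ ⬝ᵥ (rho0 q₁ q₂ ρ₁ ρ₂ *ᵥ ν₂))
    (h12 : ρ12 = star ν₁ ⬝ᵥ (rho0 q₁ q₂ ρ₁ ρ₂ *ᵥ ν₂))
    :
    (C₁ < C₂ →
        PIset C₂ q₁ q₂ ρ₁ ρ₂ = Set.Icc (ρ11 + ‖ρ12‖ ^ 2 / ρ11) 1) ∧
      (C₁ = C₂ →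
        ((ρ11 < ‖ρ12‖ → ‖ρ12‖ ≤ ρ22 →
            PIset C₂ q₁ q₂ ρ₁ ρ₂ = Set.Icc (ρ11 + ‖ρ12‖ ^ 2 / ρ11) 1) ∧
          (ρ22 < ‖ρ12‖ → ‖ρ12‖ ≤ ρ11 →
            PIset C₂ q₁ q₂ ρ₁ ρ₂ = Set.Icc (ρ22 + ‖ρ12‖ ^ 2 / ρ22) 1) ∧
          (‖ρ12‖ ≤ ρ11 → ‖ρ12‖ ≤ ρ22 →
            PIset C₂ q₁ q₂ ρ₁ ρ₂ = Set.Icc (2 * ‖ρ12‖) 1))) :=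
  stmt6_general q₁ q₂ ρ₁ ρ₂ hq htr₁ htr₂ hρ0 S hS hSS ν₁ ν₂ hν₁ hν₂ hν₁₂ C₁ C₂ hC12 hCsum hbar₁
    hbar₂ ρ11 ρ22 ρ12 h11 h22 h12

end FRIR
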